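/- Let M be an n×n real symmetric positive-definite matrix and let 1 ≤ k < n. If I and J are two k-element subsets of {1,…,n} whose intersection has k−1 elements (i.e., the index sets differ in exactly one element), then |log det(M_I) − log det(M_J)| ≤ log κ(M) = log λ₁(M) − log λₙ(M). -/

import Mathlib

open Matrix Real Finset

/-- The log-determinant of the principal submatrix of `M` indexed by `s`. -/
noncomputable def logMinor {n : ℕ} (M : Matrix (Fin n) (Fin n) ℝ) (s : Finset (Fin n)) : ℝ :=
  Real.log (M.submatrix (fun i : {x // x ∈ s} => (i : Fin n))
    (fun i : {x // x ∈ s} => (i : Fin n))).det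

/-- The mean of `Y_k(M)`, the log-minor of a uniformly random `k`-element index set. -/
noncomputable def meanLM {n : ℕ} (k : ℕ) (M : Matrix (Fin n) (Fin n) ℝ) : ℝ :=
  (∑ s ∈ Finset.powersetCard k (Finset.univ : Finset (Fin n)), logMinor M s) / (n.choose k)

/-- The variance of `Y_k(M)` under the uniform distribution on `k`-element index sets. -/
noncomputable def varLM {n : ℕ} (k : ℕ) (M : Matrix (Fin n) (Fin n) ℝ) : ℝ :=
  (∑ s ∈ Finset.powersetCard k (Finset.univ : Finset (Fin n)),
    (logMinor M s - meanLM k M) ^ 2) / (n.choose k)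

open Classical in
/-- `P(|Y_k(M) - E[Y_k(M)]| ≥ r)` under the uniform distribution on `k`-element index sets. -/
noncomputable def probDevLM {n : ℕ} (k : ℕ) (M : Matrix (Fin n) (Fin n) ℝ) (r : ℝ) : ℝ :=
  (((Finset.powersetCard k (Finset.univ : Finset (Fin n))).filter
      (fun s => r ≤ |logMinor M s - meanLM k M|)).card : ℝ) / (n.choose k)

/-- The largest eigenvalue `λ₁(M)` of a Hermitian matrix. -/
noncomputable def maxEig {n : ℕ} {M : Matrix (Fin n) (Fin n) ℝ} (hM : M.IsHermitian) : ℝ :=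
  ⨆ i, hM.eigenvalues i

/-- The smallest eigenvalue `λₙ(M)` of a Hermitian matrix. -/
noncomputable def minEig {n : ℕ} {M : Matrix (Fin n) (Fin n) ℝ} (hM : M.IsHermitian) : ℝ :=
  ⨅ i, hM.eigenvalues i

/-- The condition number `κ(M) = λ₁(M) / λₙ(M)` of a Hermitian matrix. -/
noncomputable def condNum {n : ℕ} {M : Matrix (Fin n) (Fin n) ℝ} (hM : M.IsHermitian) : ℝ :=
  maxEig hM / minEig hM

/-!
Put `K = I ∩ J`, so that `I = insert i K` and `J = insert j K`. By the Schur complement formula,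
`det M_{insert i K} = det M_K * s` where `s` is the Schur complement of `M_K` in `M_{insert i K}`.
The Loewner bounds `λₙ • 1 ≤ M ≤ λ₁ • 1` pass to principal submatrices and then to Schur
complements, so `s ∈ [λₙ, λ₁]`. Hence `logMinor M I - logMinor M K` and `logMinor M J - logMinor M K`
both lie in `[log λₙ, log λ₁]`, and their difference is at most `log λ₁ - log λₙ`.
-/

open scoped MatrixOrder ComplexOrder

namespace Matrix

variable {𝕜 ι κ : Type*} [RCLike 𝕜] [DecidableEq ι] [DecidableEq κ]

theorem IsHermitian.smul_one_le [Fintype ι] {A : Matrix ι ι 𝕜} (hA : A.IsHermitian) {c : ℝ}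
    (h : ∀ i, c ≤ hA.eigenvalues i) : c • (1 : Matrix ι ι 𝕜) ≤ A := by
  rw [← Algebra.algebraMap_eq_smul_one]
  refine algebraMap_le_of_le_spectrum ?_ hA.isSelfAdjoint
  rw [hA.spectrum_real_eq_range_eigenvalues]
  rintro _ ⟨i, rfl⟩
  exact h i

theorem IsHermitian.le_smul_one [Fintype ι] {A : Matrix ι ι 𝕜} (hA : A.IsHermitian) {c : ℝ}
    (h : ∀ i, hA.eigenvalues i ≤ c) : A ≤ c • (1 : Matrix ι ι 𝕜) := by
  rw [← Algebra.algebraMap_eq_smul_one]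
  refine le_algebraMap_of_spectrum_le ?_ hA.isSelfAdjoint
  rw [hA.spectrum_real_eq_range_eigenvalues]
  rintro _ ⟨i, rfl⟩
  exact h i

theorem smul_one_le_submatrix {A : Matrix ι ι 𝕜} {c : ℝ} (h : c • (1 : Matrix ι ι 𝕜) ≤ A)
    {g : κ → ι} (hg : Function.Injective g) : c • (1 : Matrix κ κ 𝕜) ≤ A.submatrix g g := by
  rw [le_iff, ← submatrix_one g hg]
  exact (le_iff.mp h).submatrix g

theorem submatrix_le_smul_one {A : Matrix ι ι 𝕜} {c : ℝ} (h : A ≤ c • (1 : Matrix ι ι 𝕜))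
    {g : κ → ι} (hg : Function.Injective g) : A.submatrix g g ≤ c • (1 : Matrix κ κ 𝕜) := by
  rw [le_iff, ← submatrix_one g hg]
  exact (le_iff.mp h).submatrix g

variable {m n : Type*} [Fintype m] [Fintype n] [DecidableEq m] [DecidableEq n]

theorem smul_one_le_schur₁₁ {A : Matrix m m 𝕜} (B : Matrix m n 𝕜) (D : Matrix n n 𝕜)
    (hA : A.PosDef) [Invertible A] {c : ℝ} (hc : 0 ≤ c)
    (h : c • (1 : Matrix (m ⊕ n) (m ⊕ n) 𝕜) ≤ fromBlocks A B Bᴴ D) :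
    c • (1 : Matrix n n 𝕜) ≤ D - Bᴴ * A⁻¹ * B := by
  have hcA : (fromBlocks (c • 1 : Matrix m m 𝕜) 0 0 (0 : Matrix n n 𝕜)).PosSemidef := by
    have hd : 0 ≤ Sum.elim (fun _ : m => (c : 𝕜)) (0 : n → 𝕜) := by
      rintro (i | i) <;> simp [hc]
    convert PosSemidef.diagonal hd using 1
    ext (i | i) (j | j) <;> simp [one_apply, diagonal_apply, RCLike.real_smul_eq_coe_mul]
  -- Put `c • 1` back on the `A`-block only: the Schur criterion `PosDef.fromBlocks₁₁` needs that
  -- block positive definite.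
  have hshift : (fromBlocks A B Bᴴ (D - c • 1)).PosSemidef := by
    convert (le_iff.mp h).add hcA using 1
    ext (i | i) (j | j) <;> simp [one_apply]
  rw [le_iff, sub_right_comm]
  exact (PosDef.fromBlocks₁₁ B _ hA).mp hshift

theorem schur₁₁_le_smul_one {A : Matrix m m 𝕜} (B : Matrix m n 𝕜) (D : Matrix n n 𝕜)
    (hA : A.PosSemidef) {c : ℝ}
    (h : fromBlocks A B Bᴴ D ≤ c • (1 : Matrix (m ⊕ n) (m ⊕ n) 𝕜)) :
    D - Bᴴ * A⁻¹ * B ≤ c • (1 : Matrix n n 𝕜) := by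
  have hD : (c • 1 - D).PosSemidef := by
    convert (le_iff.mp h).submatrix Sum.inr using 1
    ext i j; simp [one_apply]
  rw [le_iff, sub_sub_eq_add_sub, add_sub_right_comm]
  exact hD.add (hA.inv.conjTranspose_mul_mul_same B)

theorem exists_det_eq_det_toBlocks₁₁_mul {S : Matrix (m ⊕ Unit) (m ⊕ Unit) ℝ} {c C : ℝ}
    (hc : 0 < c) (hcS : c • 1 ≤ S) (hSC : S ≤ C • 1) :
    ∃ s ∈ Set.Icc c C, S.det = S.toBlocks₁₁.det * s := by
  have hS : S.PosDef := by
    simpa using PosDef.posSemidef_add (le_iff.mp hcS) (PosDef.one.smul hc)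
  set A := S.toBlocks₁₁
  set B := S.toBlocks₁₂
  have hA : A.PosDef := hS.submatrix Sum.inl_injective
  have hblocks : fromBlocks A B Bᴴ S.toBlocks₂₂ = S := by
    conv_rhs => rw [← fromBlocks_toBlocks S]
    congr 1
    ext i j
    exact hS.1.apply (Sum.inr i) (Sum.inl j)
  have := hA.isUnit.invertible
  rw [← hblocks] at hcS hSC
  have hlo := PosSemidef.diag_nonneg (le_iff.mp (smul_one_le_schur₁₁ B _ hA hc.le hcS)) (i := ())
  have hhi := PosSemidef.diag_nonneg (le_iff.mp (schur₁₁_le_smul_one B _ hA.posSemidef hSC)) (i := ())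
  refine ⟨(S.toBlocks₂₂ - Bᴴ * A⁻¹ * B) () (), ⟨?_, ?_⟩, ?_⟩
  · simpa using hlo
  · simpa using hhi
  · rw [← hblocks, det_fromBlocks₁₁, invOf_eq_nonsing_inv, det_unique (_ - _)]
    rfl

end Matrix

section LogMinor

variable {n : ℕ} {M : Matrix (Fin n) (Fin n) ℝ}

theorem minEig_smul_one_le (hM : M.IsHermitian) : minEig hM • (1 : Matrix (Fin n) (Fin n) ℝ) ≤ M :=
  hM.smul_one_le fun i => ciInf_le (Set.finite_range _).bddBelow i

theorem le_maxEig_smul_one (hM : M.IsHermitian) : M ≤ maxEig hM • (1 : Matrix (Fin n) (Fin n) ℝ) :=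
  hM.le_smul_one fun i => le_ciSup (Set.finite_range _).bddAbove i

theorem minEig_pos [Nonempty (Fin n)] (hM : M.PosDef) : 0 < minEig hM.1 := by
  obtain ⟨i, hi⟩ := exists_eq_ciInf_of_finite (f := hM.1.eigenvalues)
  rw [minEig, ← hi]
  exact hM.eigenvalues_pos i

theorem exists_det_submatrix_insert_eq_mul (hM : M.PosDef) {K : Finset (Fin n)} {i : Fin n}
    (hi : i ∉ K) :
    ∃ s ∈ Set.Icc (minEig hM.1) (maxEig hM.1),
      (M.submatrix (fun x : {x // x ∈ insert i K} => (x : Fin n))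
        (fun x : {x // x ∈ insert i K} => (x : Fin n))).det =
      (M.submatrix (fun x : {x // x ∈ K} => (x : Fin n))
        (fun x : {x // x ∈ K} => (x : Fin n))).det * s := by
  have : Nonempty (Fin n) := ⟨i⟩
  let g : {x // x ∈ K} ⊕ Unit → Fin n := Sum.elim Subtype.val fun _ => i
  have hg : Function.Injective g :=
    Subtype.val_injective.sumElim (fun _ _ _ => rfl) fun x _ h => hi (h ▸ x.2)
  obtain ⟨s, hs, hdet⟩ := exists_det_eq_det_toBlocks₁₁_mul (minEig_pos hM)
    (smul_one_le_submatrix (minEig_smul_one_le hM.1) hg)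
    (submatrix_le_smul_one (le_maxEig_smul_one hM.1) hg)
  refine ⟨s, hs, ?_⟩
  let e : {x // x ∈ K} ⊕ Unit ≃ {x // x ∈ insert i K} :=
    ((Finset.subtypeInsertEquivOption hi).trans (Equiv.optionEquivSumPUnit _)).symm
  have hreindex : (M.submatrix (fun x : {x // x ∈ insert i K} => (x : Fin n))
      (fun x : {x // x ∈ insert i K} => (x : Fin n))).submatrix e e = M.submatrix g g := by
    ext (a | a) (b | b) <;> rfl
  rw [← det_submatrix_equiv_self e, hreindex, hdet]
  rfl

theorem logMinor_insert_sub_mem_Icc (hM : M.PosDef) {K : Finset (Fin n)} {i : Fin n}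
    (hi : i ∉ K) :
    logMinor M (insert i K) - logMinor M K ∈
      Set.Icc (log (minEig hM.1)) (log (maxEig hM.1)) := by
  have : Nonempty (Fin n) := ⟨i⟩
  obtain ⟨s, ⟨hlo, hhi⟩, hdet⟩ := exists_det_submatrix_insert_eq_mul hM hi
  have hs : 0 < s := (minEig_pos hM).trans_le hlo
  have hK := (hM.submatrix (e := fun x : {x // x ∈ K} => (x : Fin n)) Subtype.val_injective).det_pos
  rw [logMinor, logMinor, hdet, log_mul hK.ne' hs.ne', add_sub_cancel_left]
  exact ⟨log_le_log (minEig_pos hM) hlo, log_le_log hs hhi⟩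

end LogMinor

theorem log_minor_adjacent_diff_bound_general {n k : ℕ} (hk1 : 1 ≤ k)
    (M : Matrix (Fin n) (Fin n) ℝ) (hM : M.PosDef)
    (I J : Finset (Fin n)) (hI : I.card = k) (hJ : J.card = k)
    (hIJ : (I ∩ J).card = k - 1) :
    |logMinor M I - logMinor M J| ≤ Real.log (maxEig hM.1) - Real.log (minEig hM.1) := by
  obtain ⟨i, hi, hIK⟩ := exists_eq_insert_iff.mpr
    ⟨inter_subset_left, (by omega : #(I ∩ J) + 1 = #I)⟩
  obtain ⟨j, hj, hJK⟩ := exists_eq_insert_iff.mpr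
    ⟨inter_subset_right, (by omega : #(I ∩ J) + 1 = #J)⟩
  have hIbound := logMinor_insert_sub_mem_Icc hM hi
  have hJbound := logMinor_insert_sub_mem_Icc hM hj
  rw [hIK] at hIbound
  rw [hJK] at hJbound
  rw [abs_sub_le_iff]
  constructor <;> linarith [hIbound.1, hIbound.2, hJbound.1, hJbound.2]

theorem log_minor_adjacent_diff_bound {n k : ℕ} (hk1 : 1 ≤ k) (hkn : k < n)
    (M : Matrix (Fin n) (Fin n) ℝ) (hM : M.PosDef)
    (I J : Finset (Fin n)) (hI : I.card = k) (hJ : J.card = k)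
    (hIJ : (I ∩ J).card = k - 1) :
    |logMinor M I - logMinor M J| ≤ Real.log (maxEig hM.1) - Real.log (minEig hM.1) :=
  log_minor_adjacent_diff_bound_general hk1 M hM I J hI hJ hIJ
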